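/- arXiv:2412.14728 — 7 statements merged into one kernel-verified Lean document; each statement's English description precedes it below -/
import Mathlib

section
/- Let N = (2^P, S, δ, s₀, F) be an NFA and V = {U₁, …, Uₙ} ⊆ P, and let N_{∃U₁,…,Uₙ} be its existential abstraction. Then for every finite trace t over 2^P: t is accepted by the complement of the determinization D(N_{∃U₁,…,Uₙ}) if and only if for every trace t' with t' ~_{-V} t, t' ∉ L(N). -/
/-! ## Automata -/

/-- A deterministic finite automaton (DFA) over alphabet `α` with states `S`:
a designated initial state, a total transition function, and a set of accepting states. -/
structure DFA' (α : Type*) (S : Type*) where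
  start : S
  step : S → α → S
  accept : Set S

namespace DFA'

variable {α S : Type*}

/-- The state reached from `s` after reading the word `w`. -/
def evalFrom (M : DFA' α S) (s : S) (w : List α) : S :=
  w.foldl M.step s

/-- A DFA accepts a finite word iff its unique run from the initial state ends in an
accepting state. -/
def Accepts (M : DFA' α S) (w : List α) : Prop :=
  M.evalFrom M.start w ∈ M.accept

/-- The complement of a DFA, obtained by complementing its set of accepting states. -/
def compl (M : DFA' α S) : DFA' α S :=
  { M with accept := M.acceptᶜ }

/-- The synchronous product of two DFAs over the same alphabet. -/
def prod {S₁ S₂ : Type*} (M₁ : DFA' α S₁) (M₂ : DFA' α S₂) : DFA' α (S₁ × S₂) where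
  start := (M₁.start, M₂.start)
  step := fun p a => (M₁.step p.1 a, M₂.step p.2 a)
  accept := {p | p.1 ∈ M₁.accept ∧ p.2 ∈ M₂.accept}

end DFA'

/-- A nondeterministic finite automaton (NFA) over alphabet `α` with states `S`:
a designated initial state, a transition function into sets of states, and a set of
accepting states. -/
structure NFA' (α : Type*) (S : Type*) where
  start : S
  step : S → α → Set S
  accept : Set S

namespace NFA'

variable {α S : Type*}

/-- One step of the subset construction. -/
def stepSet (M : NFA' α S) (T : Set S) (a : α) : Set S :=
  ⋃ s ∈ T, M.step s a

/-- The set of states reachable from a state in `T` after reading the word `w`. -/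
def evalFrom (M : NFA' α S) (T : Set S) (w : List α) : Set S :=
  w.foldl M.stepSet T

/-- An NFA accepts a finite word iff some run from the initial state on that word
ends in an accepting state. -/
def Accepts (M : NFA' α S) (w : List α) : Prop :=
  ∃ s ∈ M.evalFrom {M.start} w, s ∈ M.accept

/-- The determinization `D(M)` of an NFA `M` by the subset construction. -/
def det (M : NFA' α S) : DFA' α (Set S) where
  start := {M.start}
  step := M.stepSet
  accept := {T | ∃ s ∈ T, s ∈ M.accept}

end NFA'

/-- A DFA viewed as an NFA. -/
def DFA'.toNFA' {α S : Type*} (M : DFA' α S) : NFA' α S where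
  start := M.start
  step := fun s a => {M.step s a}
  accept := M.accept

/-! ## Traces -/

/-- Two finite traces over `2^P` are equivalent up to the variables in `V`
(written `t' ~_{-V} t` in the paper): they have the same length and at every position
they contain exactly the same variables of `P \ V`. -/
def EquivUpTo {P : Type*} (V : Set P) (t t' : List (Set P)) : Prop :=
  List.Forall₂ (fun a b => a \ V = b \ V) t t'

/-- The existentially abstracted NFA `N_{∃V}`: same states, initial and accepting states,
and `δ'(s, a) = { s' | ∃ a' with a ~_{-V} a' and s' ∈ δ(s, a') }`. -/
def NFA'.abstract {P S : Type*} (M : NFA' (Set P) S) (V : Set P) : NFA' (Set P) S :=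
  { M with step := fun s a => {s' | ∃ a' : Set P, a \ V = a' \ V ∧ s' ∈ M.step s a'} }

/-- The belief-state DFA `G^rel_A` of a DFA `A` over `2^{X ∪ Y}` with unreliable input
variables `Xunr ⊆ X`: states are sets of states of `A`, the initial state is `{s₀}`,
`∂(B, a) = { s' | ∃ s ∈ B, ∃ a' with a ~_{-Xunr} a' and δ(s, a') = s' }`, and a belief
state `B` is accepting iff `B ⊆ F`. -/
def DFA'.belief {X Y S : Type*} (A : DFA' (Set (X ⊕ Y)) S) (Xunr : Set X) :
    DFA' (Set (X ⊕ Y)) (Set S) where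
  start := {A.start}
  step := fun B a => {s' | ∃ s ∈ B, ∃ a' : Set (X ⊕ Y),
    a \ (Sum.inl '' Xunr) = a' \ (Sum.inl '' Xunr) ∧ A.step s a' = s'}
  accept := {B | B ⊆ A.accept}

/-! ## LTLf and QLTLf -/

/-- LTLf formulas over propositional variables `P`. -/
inductive LTLf (P : Type*) where
  | atom : P → LTLf P
  | not : LTLf P → LTLf P
  | and : LTLf P → LTLf P → LTLf P
  | next : LTLf P → LTLf P
  | until_ : LTLf P → LTLf P → LTLf P

/-- Satisfaction `t, i ⊨ φ` of an LTLf formula at position `i` (0-indexed) of a finite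
trace `t`. -/
def LTLf.Sat {P : Type*} (t : List (Set P)) : LTLf P → ℕ → Prop
  | .atom a, i => ∃ h : i < t.length, a ∈ t.get ⟨i, h⟩
  | .not φ, i => ¬ LTLf.Sat t φ i
  | .and φ ψ, i => LTLf.Sat t φ i ∧ LTLf.Sat t ψ i
  | .next φ, i => i + 1 < t.length ∧ LTLf.Sat t φ (i + 1)
  | .until_ φ ψ, i => ∃ j, i ≤ j ∧ j < t.length ∧ LTLf.Sat t ψ j ∧
      ∀ k, i ≤ k → k < j → LTLf.Sat t φ k

/-- QLTLf formulas over propositional variables `P`: LTLf extended with second-order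
existential quantification over propositional variables. -/
inductive QLTLf (P : Type*) where
  | atom : P → QLTLf P
  | not : QLTLf P → QLTLf P
  | and : QLTLf P → QLTLf P → QLTLf P
  | next : QLTLf P → QLTLf P
  | until_ : QLTLf P → QLTLf P → QLTLf P
  | ex : P → QLTLf P → QLTLf P

/-- Satisfaction `t, i ⊨ φ` of a QLTLf formula at position `i` (0-indexed) of a finite
trace `t`; `t, i ⊨ ∃X. φ` iff there is a trace `t'` with `t' ~_{-{X}} t` and `t', i ⊨ φ`. -/
def QLTLf.Sat {P : Type*} : List (Set P) → QLTLf P → ℕ → Prop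
  | t, .atom a, i => ∃ h : i < t.length, a ∈ t.get ⟨i, h⟩
  | t, .not φ, i => ¬ QLTLf.Sat t φ i
  | t, .and φ ψ, i => QLTLf.Sat t φ i ∧ QLTLf.Sat t ψ i
  | t, .next φ, i => i + 1 < t.length ∧ QLTLf.Sat t φ (i + 1)
  | t, .until_ φ ψ, i => ∃ j, i ≤ j ∧ j < t.length ∧ QLTLf.Sat t ψ j ∧
      ∀ k, i ≤ k → k < j → QLTLf.Sat t φ k
  | t, .ex p φ, i => ∃ t', EquivUpTo {p} t' t ∧ QLTLf.Sat t' φ i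

/-- Universal second-order quantification `∀X. φ := ¬∃X. ¬φ`. -/
def QLTLf.all {P : Type*} (p : P) (φ : QLTLf P) : QLTLf P :=
  .not (.ex p (.not φ))

/-- The embedding of (quantifier-free) LTLf formulas into QLTLf. -/
def LTLf.toQ {P : Type*} : LTLf P → QLTLf P
  | .atom a => .atom a
  | .not φ => .not φ.toQ
  | .and φ ψ => .and φ.toQ ψ.toQ
  | .next φ => .next φ.toQ
  | .until_ φ ψ => .until_ φ.toQ ψ.toQ

/-! ## Strategies, plays and synthesis -/

section Synthesis

variable {X Y : Type*}

/-- The letter `X ∪ Y ∈ 2^{X ∪ Y}` combining an input letter `A ∈ 2^X` and an output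
letter `B ∈ 2^Y`. -/
def combine (A : Set X) (B : Set Y) : Set (X ⊕ Y) :=
  Sum.inl '' A ∪ Sum.inr '' B

/-- The finite trace `((X₀ ∪ Y₀), …, (X_k ∪ Y_k))` with `Y_i = σ(X₀, …, X_{i-1})`
produced by the strategy `σ` against the infinite input sequence `env`. -/
def playTrace (σ : List (Set X) → Set Y) (env : ℕ → Set X) (k : ℕ) :
    List (Set (X ⊕ Y)) :=
  (List.range (k + 1)).map fun i => combine (env i) (σ ((List.range i).map env))

/-- The strategy `σ` is winning for the agent in the DFA game on `G`: for every infinite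
input sequence there is a `k` such that the run of `G` on the induced finite trace ends
in an accepting state. -/
def Winning {S : Type*} (G : DFA' (Set (X ⊕ Y)) S) (σ : List (Set X) → Set Y) : Prop :=
  ∀ env : ℕ → Set X, ∃ k : ℕ, G.Accepts (playTrace σ env k)

/-- The strategy `σ` realizes the LTLf formula `φ` in standard LTLf synthesis. -/
def Realizes (σ : List (Set X) → Set Y) (φ : LTLf (X ⊕ Y)) : Prop :=
  ∀ env : ℕ → Set X, ∃ k : ℕ, LTLf.Sat (playTrace σ env k) φ 0

/-- The strategy `σ` realizes QLTLf synthesis for the QLTLf formula `ψ`. -/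
def RealizesQ (σ : List (Set X) → Set Y) (ψ : QLTLf (X ⊕ Y)) : Prop :=
  ∀ env : ℕ → Set X, ∃ k : ℕ, QLTLf.Sat (playTrace σ env k) ψ 0

/-- The strategy `σ` solves LTLf synthesis under unreliable input for main specification
`φm`, backup specification `φb`, and unreliable input variables `Xunr`: for every
infinite input sequence there is a `k` such that the induced finite trace `t` satisfies
`φm` and every trace `t'` with `t' ~_{-Xunr} t` satisfies `φb`. -/
def SolvesUnreliable (σ : List (Set X) → Set Y) (φm φb : LTLf (X ⊕ Y))
    (Xunr : Set X) : Prop :=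
  ∀ env : ℕ → Set X, ∃ k : ℕ,
    LTLf.Sat (playTrace σ env k) φm 0 ∧
    ∀ t', EquivUpTo (Sum.inl '' Xunr) t' (playTrace σ env k) → LTLf.Sat t' φb 0

end Synthesis

/-! The states of `N_{∃V}` reachable on `t` are exactly the states of `N` reachable on the
traces `t' ~_{-V} t`: at each letter the abstraction lets the run guess the `V`-part freely.
Hence the subset construction `D(N_{∃V})` accepts `t` iff `N` accepts some `t' ~_{-V} t`, and
complementing the accepting states negates this. -/

lemma DFA'.compl_accepts_iff {α S : Type*} (M : DFA' α S) (w : List α) :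
    M.compl.Accepts w ↔ ¬ M.Accepts w :=
  Iff.rfl

namespace NFA'

variable {α S : Type*}

lemma stepSet_iUnion {ι : Sort*} (M : NFA' α S) (T : ι → Set S) (a : α) :
    M.stepSet (⋃ i, T i) a = ⋃ i, M.stepSet (T i) a := by
  simp only [stepSet, Set.biUnion_iUnion]

lemma evalFrom_iUnion {ι : Sort*} (M : NFA' α S) (T : ι → Set S) (w : List α) :
    M.evalFrom (⋃ i, T i) w = ⋃ i, M.evalFrom (T i) w := by
  induction w generalizing T with
  | nil => rfl
  | cons a w ih => exact (congrArg (M.evalFrom · w) (M.stepSet_iUnion T a)).trans (ih _)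

lemma det_accepts_iff (M : NFA' α S) (w : List α) : M.det.Accepts w ↔ M.Accepts w :=
  Iff.rfl

variable {P : Type*}

lemma abstract_stepSet (M : NFA' (Set P) S) (V : Set P) (T : Set S) (a : Set P) :
    (M.abstract V).stepSet T a = ⋃ b : {b : Set P // a \ V = b \ V}, M.stepSet T b := by
  ext s
  simp only [stepSet, abstract, Set.mem_iUnion, Set.mem_ofPred_eq, Subtype.exists, exists_prop]
  exact ⟨fun ⟨x, hx, b, hb, hs⟩ => ⟨b, hb, x, hx, hs⟩, fun ⟨b, hb, x, hx, hs⟩ => ⟨x, hx, b, hb, hs⟩⟩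

lemma mem_abstract_evalFrom_iff (M : NFA' (Set P) S) (V : Set P) (T : Set S)
    (w : List (Set P)) (s : S) :
    s ∈ (M.abstract V).evalFrom T w ↔ ∃ w', EquivUpTo V w' w ∧ s ∈ M.evalFrom T w' := by
  induction w generalizing T with
  | nil => simp [EquivUpTo, evalFrom]
  | cons a w ih =>
    calc s ∈ (M.abstract V).evalFrom T (a :: w)
        ↔ ∃ w', EquivUpTo V w' w ∧ s ∈ M.evalFrom ((M.abstract V).stepSet T a) w' := ih _
      _ ↔ ∃ w', EquivUpTo V w' w ∧ ∃ b, a \ V = b \ V ∧ s ∈ M.evalFrom (M.stepSet T b) w' := by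
        simp only [abstract_stepSet, evalFrom_iUnion, Set.mem_iUnion, Subtype.exists,
          exists_prop]
      _ ↔ ∃ w', EquivUpTo V w' (a :: w) ∧ s ∈ M.evalFrom T w' := by
        simp only [EquivUpTo, List.forall₂_cons_right_iff]
        constructor
        · rintro ⟨w', hw', b, hb, hs⟩
          exact ⟨b :: w', ⟨b, w', hb.symm, hw', rfl⟩, hs⟩
        · rintro ⟨_, ⟨b, w', hb, hw', rfl⟩, hs⟩
          exact ⟨w', hw', b, hb.symm, hs⟩

lemma abstract_accepts_iff (M : NFA' (Set P) S) (V : Set P) (w : List (Set P)) :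
    (M.abstract V).Accepts w ↔ ∃ w', EquivUpTo V w' w ∧ M.Accepts w' := by
  simp only [Accepts, mem_abstract_evalFrom_iff]
  exact ⟨fun ⟨s, ⟨w', hw', hs⟩, hacc⟩ => ⟨w', hw', s, hs, hacc⟩,
    fun ⟨w', hw', s, hs, hacc⟩ => ⟨s, ⟨w', hw', hs⟩, hacc⟩⟩

end NFA'

theorem compl_det_abstract_accepts_iff_general {P S : Type*}
    (N : NFA' (Set P) S) (V : Finset P) (t : List (Set P)) :
    ((N.abstract ↑V).det.compl).Accepts t ↔
      ∀ t', EquivUpTo (↑V) t' t → ¬ N.Accepts t' := by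
  rw [DFA'.compl_accepts_iff, NFA'.det_accepts_iff, NFA'.abstract_accepts_iff]
  simp only [not_exists, not_and]

/-- For an NFA `N` over `2^P` and `V = {U₁, …, Uₙ} ⊆ P`, and every finite
trace `t`: `t` is accepted by the complement of the determinization `D(N_{∃U₁,…,Uₙ})`
iff every trace `t'` with `t' ~_{-V} t` satisfies `t' ∉ L(N)`. -/
theorem compl_det_abstract_accepts_iff {P S : Type*}
    (N : NFA' (Set P) S) (V : Finset P) (t : List (Set P)) (ht : t ≠ []) :
    ((N.abstract ↑V).det.compl).Accepts t ↔
      ∀ t', EquivUpTo (↑V) t' t → ¬ N.Accepts t' :=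
  compl_det_abstract_accepts_iff_general N V t
end

section
/- Let A = (2^{X∪Y}, S, s₀, δ, F) be a DFA with input variables partitioned as X = X_rel ⊎ X_unr, and let G^rel_A be its belief-state DFA. Then for any two finite traces t, t' over 2^{X∪Y} with t' ~_{-X_unr} t: t ∈ L(G^rel_A) if and only if t' ∈ L(G^rel_A). -/
/-- `∂(B, a)` ranges over the whole `~_{-Xunr}`-class of `a`, and that relation is an
equivalence. -/
theorem DFA'.belief_step_eq_of_sdiff_eq {X Y S : Type*} (A : DFA' (Set (X ⊕ Y)) S)
    (Xunr : Set X) (B : Set S) {a b : Set (X ⊕ Y)}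
    (hab : a \ (Sum.inl '' Xunr) = b \ (Sum.inl '' Xunr)) :
    (A.belief Xunr).step B a = (A.belief Xunr).step B b := by
  ext s'
  constructor
  · rintro ⟨s, hs, a', ha', rfl⟩
    exact ⟨s, hs, a', hab ▸ ha', rfl⟩
  · rintro ⟨s, hs, a', hb', rfl⟩
    exact ⟨s, hs, a', hab.trans hb', rfl⟩

theorem DFA'.evalFrom_eq_of_forall₂ {α S : Type*} (M : DFA' α S) {R : α → α → Prop}
    (hR : ∀ s a b, R a b → M.step s a = M.step s b) {u v : List α}
    (huv : List.Forall₂ R u v) (s : S) : M.evalFrom s u = M.evalFrom s v := by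
  induction huv generalizing s with
  | nil => rfl
  | cons hab _ ih =>
    simp only [DFA'.evalFrom, List.foldl_cons] at ih ⊢
    rw [hR s _ _ hab]
    exact ih _

theorem belief_accepts_invariant_general {X Y S : Type*}
    (A : DFA' (Set (X ⊕ Y)) S) (Xunr : Set X)
    (t t' : List (Set (X ⊕ Y)))
    (h : EquivUpTo (Sum.inl '' Xunr) t' t) :
    (A.belief Xunr).Accepts t ↔ (A.belief Xunr).Accepts t' := by
  have hrun := (A.belief Xunr).evalFrom_eq_of_forall₂
    (fun B _ _ hab => A.belief_step_eq_of_sdiff_eq Xunr B hab) h (A.belief Xunr).start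
  rw [DFA'.Accepts, DFA'.Accepts, hrun]

/-- For a DFA `A` over `2^{X∪Y}` with unreliable input variables `Xunr`
and any two finite traces `t, t'` with `t' ~_{-Xunr} t`: `t ∈ L(G^rel_A)` iff
`t' ∈ L(G^rel_A)`. -/
theorem belief_accepts_invariant {X Y S : Type*}
    (A : DFA' (Set (X ⊕ Y)) S) (Xunr : Set X)
    (t t' : List (Set (X ⊕ Y))) (ht : t ≠ [])
    (h : EquivUpTo (Sum.inl '' Xunr) t' t) :
    (A.belief Xunr).Accepts t ↔ (A.belief Xunr).Accepts t' :=
  belief_accepts_invariant_general A Xunr t t' h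
end

section
/- Let A = (2^{X∪Y}, S, s₀, δ, F) be a DFA with input variables partitioned as X = X_rel ⊎ X_unr, and let G^rel_A be its belief-state DFA. If a finite trace t induces the run (B₀ = {s₀}, B₁, …, B_{k+1}) in G^rel_A, then for every state s ∈ B_{k+1} there exists a trace t' with t' ~_{-X_unr} t such that the run of A on t' from s₀ ends in s. -/
theorem DFA'.belief_evalFrom_subset {X Y S : Type*} (A : DFA' (Set (X ⊕ Y)) S)
    (Xunr : Set X) (B : Set S) (t : List (Set (X ⊕ Y))) :
    (A.belief Xunr).evalFrom B t ⊆
      {s | ∃ s₀ ∈ B, ∃ t', EquivUpTo (Sum.inl '' Xunr) t' t ∧ A.evalFrom s₀ t' = s} := by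
  induction t generalizing B with
  | nil => exact fun s hs => ⟨s, hs, [], .nil, rfl⟩
  | cons a t ih =>
    intro s hs
    obtain ⟨_, ⟨s₀, hs₀, a', ha', rfl⟩, t', ht', rfl⟩ := ih ((A.belief Xunr).step B a) hs
    exact ⟨s₀, hs₀, a' :: t', .cons ha'.symm ht', rfl⟩

theorem belief_state_members_reachable_general {X Y S : Type*}
    (A : DFA' (Set (X ⊕ Y)) S) (Xunr : Set X)
    (t : List (Set (X ⊕ Y))) (s : S)
    (hs : s ∈ (A.belief Xunr).evalFrom (A.belief Xunr).start t) :
    ∃ t', EquivUpTo (Sum.inl '' Xunr) t' t ∧ A.evalFrom A.start t' = s := by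
  obtain ⟨_, rfl, t', ht', hrun⟩ := A.belief_evalFrom_subset Xunr _ t hs
  exact ⟨t', ht', hrun⟩

/-- For a DFA `A` over `2^{X∪Y}` with unreliable input variables `Xunr`:
if a finite trace `t` induces a run of the belief-state DFA `G^rel_A` ending in the
belief state `B`, then for every `s ∈ B` there is a trace `t'` with `t' ~_{-Xunr} t`
such that the run of `A` on `t'` from the initial state ends in `s`. -/
theorem belief_state_members_reachable {X Y S : Type*}
    (A : DFA' (Set (X ⊕ Y)) S) (Xunr : Set X)
    (t : List (Set (X ⊕ Y))) (ht : t ≠ []) (s : S)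
    (hs : s ∈ (A.belief Xunr).evalFrom (A.belief Xunr).start t) :
    ∃ t', EquivUpTo (Sum.inl '' Xunr) t' t ∧ A.evalFrom A.start t' = s :=
  belief_state_members_reachable_general A Xunr t s hs
end

section
/- Let A = (2^{X∪Y}, S, s₀, δ, F) be a DFA with input variables partitioned as X = X_rel ⊎ X_unr, and let G^rel_A be its belief-state DFA. Then for every finite trace t: if t ∈ L(G^rel_A) then t ∈ L(A). -/
namespace DFA'

variable {α S : Type*}

theorem evalFrom_mem_evalFrom_of_step_mem (A : DFA' α S) (G : DFA' α (Set S))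
    (hstep : ∀ B s a, s ∈ B → A.step s a ∈ G.step B a) :
    ∀ (t : List α) {B : Set S} {s : S}, s ∈ B → A.evalFrom s t ∈ G.evalFrom B t
  | [], _, _, hs => hs
  | a :: t, _, _, hs => evalFrom_mem_evalFrom_of_step_mem A G hstep t (hstep _ _ a hs)

theorem step_mem_belief_step {X Y : Type*} (A : DFA' (Set (X ⊕ Y)) S) (Xunr : Set X)
    {B : Set S} {s : S} (a : Set (X ⊕ Y)) (hs : s ∈ B) :
    A.step s a ∈ (A.belief Xunr).step B a :=
  ⟨s, hs, a, rfl, rfl⟩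

end DFA'

theorem belief_accepts_implies_accepts_general {X Y S : Type*}
    (A : DFA' (Set (X ⊕ Y)) S) (Xunr : Set X)
    (t : List (Set (X ⊕ Y)))
    (h : (A.belief Xunr).Accepts t) :
    A.Accepts t :=
  h <| A.evalFrom_mem_evalFrom_of_step_mem (A.belief Xunr)
    (fun _ _ a hs => A.step_mem_belief_step Xunr a hs) t (Set.mem_singleton A.start)

/-- For a DFA `A` over `2^{X∪Y}` with unreliable input variables `Xunr`
and every finite trace `t`: if `t ∈ L(G^rel_A)` then `t ∈ L(A)`. -/
theorem belief_accepts_implies_accepts {X Y S : Type*}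
    (A : DFA' (Set (X ⊕ Y)) S) (Xunr : Set X)
    (t : List (Set (X ⊕ Y))) (ht : t ≠ [])
    (h : (A.belief Xunr).Accepts t) :
    A.Accepts t :=
  belief_accepts_implies_accepts_general A Xunr t h
end

section
/- Let φ_b be an LTLf formula over X ∪ Y with X = X_rel ⊎ X_unr, and let A be a DFA over 2^{X∪Y} with L(A) = { t | t ⊨ φ_b }. Then for every finite trace t: t ∈ L(G^rel_A) if and only if every trace t' with t' ~_{-X_unr} t satisfies t' ⊨ φ_b. -/
/-! By induction on the trace, the belief state reached on `t` is exactly the set of states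
that `A` reaches on the traces `t' ~_{-Xunr} t`. Hence the belief DFA accepts `t` iff `A`
accepts every such `t'`; these have the length of `t`, so they are nonempty and `A` agrees
with `φb` on them. -/

namespace DFA'

variable {X Y S : Type*}

theorem mem_belief_evalFrom (A : DFA' (Set (X ⊕ Y)) S) (Xunr : Set X) (B : Set S)
    (t : List (Set (X ⊕ Y))) (s' : S) :
    s' ∈ (A.belief Xunr).evalFrom B t ↔
      ∃ s ∈ B, ∃ t', EquivUpTo (Sum.inl '' Xunr) t' t ∧ A.evalFrom s t' = s' := by
  induction t generalizing B with
  | nil => simp [evalFrom, EquivUpTo]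
  | cons a t ih =>
    simp only [evalFrom, List.foldl_cons] at ih ⊢
    rw [ih]
    simp only [EquivUpTo, List.forall₂_cons_right_iff]
    constructor
    · rintro ⟨_, ⟨s, hs, a', ha', rfl⟩, t', ht', rfl⟩
      exact ⟨s, hs, a' :: t', ⟨a', t', ha'.symm, ht', rfl⟩, rfl⟩
    · rintro ⟨s, hs, _, ⟨a', t', ha', ht', rfl⟩, rfl⟩
      exact ⟨A.step s a', ⟨s, hs, a', ha'.symm, rfl⟩, t', ht', rfl⟩

theorem belief_accepts_iff (A : DFA' (Set (X ⊕ Y)) S) (Xunr : Set X) (t : List (Set (X ⊕ Y))) :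
    (A.belief Xunr).Accepts t ↔ ∀ t', EquivUpTo (Sum.inl '' Xunr) t' t → A.Accepts t' := by
  show (A.belief Xunr).evalFrom {A.start} t ⊆ A.accept ↔ _
  simp only [Set.subset_def, mem_belief_evalFrom, Set.mem_singleton_iff, exists_eq_left,
    forall_exists_index, and_imp, forall_apply_eq_imp_iff₂]
  rfl

end DFA'

theorem EquivUpTo.ne_nil {P : Type*} {V : Set P} {t t' : List (Set P)}
    (h : EquivUpTo V t' t) (ht : t ≠ []) : t' ≠ [] := by
  rintro rfl
  exact ht (List.forall₂_nil_left_iff.mp h)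

/-- Let `φb` be an LTLf formula over `X ∪ Y` with unreliable input
variables `Xunr ⊆ X`, and let `A` be a DFA over `2^{X∪Y}` with `L(A) = { t | t ⊨ φb }`.
Then for every finite trace `t`: `t ∈ L(G^rel_A)` iff every trace `t'` with
`t' ~_{-Xunr} t` satisfies `t' ⊨ φb`. -/
theorem belief_accepts_iff_backup {X Y S : Type*}
    (φb : LTLf (X ⊕ Y)) (Xunr : Set X)
    (A : DFA' (Set (X ⊕ Y)) S)
    (hA : ∀ t : List (Set (X ⊕ Y)), t ≠ [] → (A.Accepts t ↔ LTLf.Sat t φb 0))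
    (t : List (Set (X ⊕ Y))) (ht : t ≠ []) :
    (A.belief Xunr).Accepts t ↔
      ∀ t', EquivUpTo (Sum.inl '' Xunr) t' t → LTLf.Sat t' φb 0 := by
  rw [DFA'.belief_accepts_iff]
  exact forall₂_congr fun t' ht' => hA t' (ht'.ne_nil ht)
end

section
/- Let φ_m and φ_b be LTLf formulas over X ⊎ Y and X_unr = {U₁, …, Uₙ} ⊆ X. A strategy σ : (2^X)* → 2^Y solves LTLf synthesis under unreliable input for (φ_m, φ_b, X_unr) if and only if σ realizes QLTLf synthesis for the QLTLf formula φ_m ∧ ∀U₁. … ∀Uₙ. φ_b. -/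
/-!
Satisfaction of `∀U₁. … ∀Uₙ. φ` at `t` means satisfaction of `φ` by every trace reachable from
`t` through a chain of traces, the `i`-th link changing only `Uᵢ`. Such chains reach exactly the
traces that differ from `t` only in `{U₁, …, Uₙ}`, since two letters agreeing outside `V ∪ W` are
linked by an intermediate letter agreeing with the first outside `V` and with the second
outside `W`.
-/

theorem List.forall₂_relComp {α β γ : Type*} {R : α → β → Prop} {S : β → γ → Prop}
    {l₁ : List α} {l₃ : List γ} :
    Forall₂ (Relation.Comp R S) l₁ l₃ ↔ ∃ l₂, Forall₂ R l₁ l₂ ∧ Forall₂ S l₂ l₃ := by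
  constructor
  · intro h
    induction h with
    | nil => exact ⟨[], .nil, .nil⟩
    | cons hab _ ih =>
      obtain ⟨b, hR, hS⟩ := hab
      obtain ⟨l₂, hR', hS'⟩ := ih
      exact ⟨b :: l₂, .cons hR hR', .cons hS hS'⟩
  · rintro ⟨l₂, hR, hS⟩
    induction hR generalizing l₃ with
    | nil => cases hS; exact .nil
    | cons hR _ ih =>
      cases hS with
      | cons hS hS' => exact .cons ⟨_, hR, hS⟩ (ih hS')

theorem Set.sdiff_union_eq_sdiff_union_iff {P : Type*} {a c V W : Set P} :
    a \ (V ∪ W) = c \ (V ∪ W) ↔ ∃ b, a \ V = b \ V ∧ b \ W = c \ W := by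
  constructor
  · intro h
    refine ⟨a \ V ∪ c ∩ V, ?_, ?_⟩ <;> ext x
    · simp only [Set.mem_sdiff, Set.mem_union, Set.mem_inter_iff]
      tauto
    · have hx := Set.ext_iff.1 h x
      simp only [Set.mem_sdiff, Set.mem_union, Set.mem_inter_iff] at hx ⊢
      tauto
  · rintro ⟨b, hab, hbc⟩
    rw [← Set.sdiff_sdiff, hab, Set.sdiff_sdiff, Set.union_comm, ← Set.sdiff_sdiff, hbc,
      Set.sdiff_sdiff, Set.union_comm]

section EquivUpTo

variable {P : Type*} {t t' : List (Set P)}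

theorem equivUpTo_empty : EquivUpTo ∅ t t' ↔ t = t' := by
  simp only [EquivUpTo, Set.sdiff_empty, List.forall₂_eq_eq_eq]

theorem equivUpTo_union {V W : Set P} :
    EquivUpTo (V ∪ W) t t' ↔ ∃ t₁, EquivUpTo V t t₁ ∧ EquivUpTo W t₁ t' := by
  have hcomp : (fun a c : Set P => a \ (V ∪ W) = c \ (V ∪ W)) =
      Relation.Comp (fun a b => a \ V = b \ V) (fun b c => b \ W = c \ W) := by
    ext a c
    exact Set.sdiff_union_eq_sdiff_union_iff
  rw [EquivUpTo, hcomp, List.forall₂_relComp]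
  rfl

end EquivUpTo

theorem LTLf.sat_toQ {P : Type*} (φ : LTLf P) (t : List (Set P)) (i : ℕ) :
    QLTLf.Sat t φ.toQ i ↔ LTLf.Sat t φ i := by
  induction φ generalizing i with
  | atom a => rfl
  | not φ ih => simp only [LTLf.toQ, QLTLf.Sat, LTLf.Sat, ih]
  | and φ ψ ihφ ihψ => simp only [LTLf.toQ, QLTLf.Sat, LTLf.Sat, ihφ, ihψ]
  | next φ ih => simp only [LTLf.toQ, QLTLf.Sat, LTLf.Sat, ih]
  | until_ φ ψ ihφ ihψ => simp only [LTLf.toQ, QLTLf.Sat, LTLf.Sat, ihφ, ihψ]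

namespace QLTLf

variable {P : Type*}

theorem sat_all {t : List (Set P)} {p : P} {φ : QLTLf P} {i : ℕ} :
    Sat t (all p φ) i ↔ ∀ t', EquivUpTo {p} t' t → Sat t' φ i := by
  simp only [all, Sat, not_exists, not_and, not_not]

theorem sat_foldr_all (ps : List P) (φ : QLTLf P) (t : List (Set P)) (i : ℕ) :
    Sat t (ps.foldr all φ) i ↔ ∀ t', EquivUpTo {p | p ∈ ps} t' t → Sat t' φ i := by
  induction ps generalizing t with
  | nil =>
    simp only [List.foldr_nil, List.not_mem_nil, Set.ofPred_false, equivUpTo_empty,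
      forall_eq]
  | cons p ps ih =>
    have hvars : {q | q ∈ p :: ps} = {q | q ∈ ps} ∪ {p} := by
      ext q
      simp only [List.mem_cons, Set.mem_ofPred_eq, Set.mem_union, Set.mem_singleton_iff, or_comm]
    simp only [List.foldr_cons, sat_all, ih, hvars, equivUpTo_union]
    constructor
    · rintro h t' ⟨t₁, ht', ht₁⟩
      exact h t₁ ht₁ t' ht'
    · exact fun h t₁ ht₁ t' ht' => h t' ⟨t₁, ht', ht₁⟩

end QLTLf

/-- Let `φm`, `φb` be LTLf formulas over `X ⊎ Y` and
`Xunr = {U₁, …, Uₙ} ⊆ X`. A strategy `σ` solves LTLf synthesis under unreliable input for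
`(φm, φb, Xunr)` iff `σ` realizes QLTLf synthesis for the QLTLf formula
`φm ∧ ∀U₁. … ∀Uₙ. φb`. -/
theorem unreliable_iff_qltlf {X Y : Type*}
    (φm φb : LTLf (X ⊕ Y)) (Us : List X)
    (σ : List (Set X) → Set Y) :
    SolvesUnreliable σ φm φb {x | x ∈ Us} ↔
      RealizesQ σ (QLTLf.and φm.toQ
        (Us.foldr (fun u acc => QLTLf.all (Sum.inl u) acc) φb.toQ)) := by
  have hvars : {p | p ∈ Us.map Sum.inl} = (Sum.inl '' {x | x ∈ Us} : Set (X ⊕ Y)) := by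
    ext p
    simp only [List.mem_map, Set.mem_ofPred_eq, Set.mem_image]
  refine forall_congr' fun env => exists_congr fun k => ?_
  rw [QLTLf.Sat, ← List.foldr_map (f := Sum.inl), QLTLf.sat_foldr_all, hvars]
  simp only [LTLf.sat_toQ]
end

section
/- For every QLTLf formula φ, every finite trace t of length n, and every position i with 1 ≤ i ≤ n: t, i ⊨ φ if and only if the MSO translation is satisfied under the trace-induced assignment, i.e., [x/i], w_t ⊨ mso(φ, x), where w_t(A) = { j | A ∈ t(j) } for each propositional variable A. -/
/-! ## Monadic second-order logic over finite words -/

/-- MSO formulas over finite words: second-order variables are the propositional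
variables in `P`, first-order variables are represented by de Bruijn indices. -/
inductive MSO (P : Type*) where
  | mem : P → ℕ → MSO P          -- `X(x)`
  | lt : ℕ → ℕ → MSO P           -- `x < y`
  | and : MSO P → MSO P → MSO P
  | not : MSO P → MSO P
  | exFO : MSO P → MSO P         -- `∃x. φ` (binds de Bruijn index `0`)
  | exSO : P → MSO P → MSO P     -- `∃X. φ`

/-- Extend a first-order assignment with a value for the newly bound variable
(de Bruijn index `0`). -/
def consEnv {n : ℕ} (d : Fin n) (u : ℕ → Fin n) : ℕ → Fin n
  | 0 => d
  | k + 1 => u k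

/-- Tarskian satisfaction of an MSO formula over the domain `{1, …, n}` (modelled as
`Fin n`), under the second-order assignment `w` and first-order assignment `u`;
first-order quantifiers range over positions, second-order quantifiers over sets of
positions. -/
def MSO.Sat {P : Type*} [DecidableEq P] (n : ℕ) :
    MSO P → (P → Set (Fin n)) → (ℕ → Fin n) → Prop
  | .mem X x, w, u => u x ∈ w X
  | .lt x y, _, u => u x < u y
  | .and φ ψ, w, u => MSO.Sat n φ w u ∧ MSO.Sat n ψ w u
  | .not φ, w, u => ¬ MSO.Sat n φ w u
  | .exFO φ, w, u => ∃ d : Fin n, MSO.Sat n φ w (consEnv d u)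
  | .exSO X φ, w, u => ∃ D : Set (Fin n), MSO.Sat n φ (Function.update w X D) u

namespace MSO

variable {P : Type*}

/-- `x ≤ y`, definable from `<`. -/
def le (x y : ℕ) : MSO P := .not (.lt y x)

/-- Implication, definable from `∧` and `¬`. -/
def impl (φ ψ : MSO P) : MSO P := .not (.and φ (.not ψ))

/-- First-order universal quantification `∀x. φ := ¬∃x. ¬φ`. -/
def allFO (φ : MSO P) : MSO P := .not (.exFO (.not φ))

/-- `succ(x, y)`: `y` is the successor position of `x`, definable from `<`. -/
def succ (x y : ℕ) : MSO P :=
  .and (.lt x y) (.not (.exFO (.and (.lt (x + 1) 0) (.lt 0 (y + 1)))))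

/-- `y = last`: `y` is the last position, definable from `<`. -/
def isLast (y : ℕ) : MSO P := .not (.exFO (.lt (y + 1) 0))

/-- `y ≤ last`, definable from `<`. -/
def leLast (y : ℕ) : MSO P := .exFO (.and (isLast 0) (le (y + 1) 0))

end MSO

/-- The translation `mso(φ, x)` from QLTLf to MSO. -/
def QLTLf.toMSO {P : Type*} : QLTLf P → ℕ → MSO P
  | .atom A, x => .mem A x
  | .not φ, x => .not (φ.toMSO x)
  | .and φ ψ, x => .and (φ.toMSO x) (ψ.toMSO x)
  | .next φ, x => .exFO (.and (MSO.succ (x + 1) 0) (φ.toMSO 0))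
  | .until_ φ ψ, x =>
      .exFO (.and (.and (MSO.le (x + 1) 0) (MSO.leLast 0))
        (.and (ψ.toMSO 0)
          (MSO.allFO (MSO.impl (.and (MSO.le (x + 2) 0) (.lt 0 1)) (φ.toMSO 0)))))
  | .ex X φ, x => .exSO X (φ.toMSO x)

/-! Every assignment `w : P → Set (Fin n)` of sets of positions to the variables is the
trace-induced assignment of exactly one trace of length `n`, namely `traceOf w`, so the claim
extends to arbitrary `w` and is proved by induction on `φ`. Under this correspondence, changing
the set assigned to `p` amounts to passing to a trace equivalent up to `{p}`, which is the case
`∃p. φ`; the temporal cases only unfold the abbreviations `succ`, `≤` and `last`. -/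

@[simp] lemma consEnv_zero {n : ℕ} (d : Fin n) (u : ℕ → Fin n) : consEnv d u 0 = d := rfl

@[simp] lemma consEnv_succ {n : ℕ} (d : Fin n) (u : ℕ → Fin n) (k : ℕ) :
    consEnv d u (k + 1) = u k := rfl

namespace MSO

variable {P : Type*} [DecidableEq P] {n : ℕ} {w : P → Set (Fin n)} {u : ℕ → Fin n}

lemma sat_le (x y : ℕ) : MSO.Sat n (le x y) w u ↔ u x ≤ u y := by
  simp [le, MSO.Sat]

lemma sat_impl (φ ψ : MSO P) :
    MSO.Sat n (impl φ ψ) w u ↔ (MSO.Sat n φ w u → MSO.Sat n ψ w u) := by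
  simp [impl, MSO.Sat]

lemma sat_allFO (φ : MSO P) :
    MSO.Sat n (allFO φ) w u ↔ ∀ d, MSO.Sat n φ w (consEnv d u) := by
  simp [allFO, MSO.Sat]

lemma sat_succ (x y : ℕ) : MSO.Sat n (succ x y) w u ↔ (u y : ℕ) = u x + 1 := by
  simp only [succ, MSO.Sat, consEnv_zero, consEnv_succ, not_exists, not_and, Fin.lt_def]
  constructor
  · rintro ⟨hxy, hgap⟩
    by_contra hne
    exact hgap ⟨u x + 1, by omega⟩ (Nat.lt_succ_self _) (by simp only; omega)
  · intro h
    exact ⟨by omega, fun d _ => by omega⟩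

lemma sat_isLast (y : ℕ) : MSO.Sat n (isLast y) w u ↔ (u y : ℕ) + 1 = n := by
  simp only [isLast, MSO.Sat, consEnv_zero, consEnv_succ, not_exists, Fin.lt_def]
  constructor
  · intro h
    by_contra hne
    exact h ⟨u y + 1, by omega⟩ (Nat.lt_succ_self _)
  · intro h d
    omega

lemma sat_leLast (y : ℕ) : MSO.Sat n (leLast y) w u := by
  have hn : 0 < n := (u y).pos
  refine ⟨⟨n - 1, by omega⟩, (sat_isLast 0).2 ?_, (sat_le _ _).2 ?_⟩
  · simp only [consEnv_zero]; omega
  · simp only [consEnv_zero, consEnv_succ, Fin.le_def]; omega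

end MSO

def traceOf {P : Type*} {n : ℕ} (w : P → Set (Fin n)) : List (Set P) :=
  List.ofFn fun j => {A | j ∈ w A}

section traceOf

variable {P : Type*} {n : ℕ}

@[simp] lemma length_traceOf (w : P → Set (Fin n)) : (traceOf w).length = n :=
  List.length_ofFn

@[simp] lemma getElem_traceOf (w : P → Set (Fin n)) (j : ℕ) (h : j < (traceOf w).length) :
    (traceOf w)[j] = {A | ⟨j, length_traceOf w ▸ h⟩ ∈ w A} :=
  List.getElem_ofFn ..

lemma traceOf_setOf_mem_get (t : List (Set P)) :
    traceOf (fun A => {j : Fin t.length | A ∈ t.get j}) = t := by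
  simp [traceOf]

lemma equivUpTo_traceOf_iff (V : Set P) (t : List (Set P)) (w : P → Set (Fin n)) :
    EquivUpTo V t (traceOf w) ↔
      ∃ w' : P → Set (Fin n), (∀ A ∉ V, w' A = w A) ∧ t = traceOf w' := by
  simp only [EquivUpTo, List.forall₂_iff_get, length_traceOf, List.get_eq_getElem,
    getElem_traceOf]
  constructor
  · rintro ⟨hlen, hdiff⟩
    refine ⟨fun A => {j | A ∈ t[j.val]}, fun A hA => ?_, ?_⟩
    · ext j
      simpa [hA] using congrArg (A ∈ ·) (hdiff j (by omega) j.isLt)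
    · exact List.ext_getElem (by simp [hlen]) fun j h₁ h₂ => by simp
  · rintro ⟨w', hw', rfl⟩
    refine ⟨by simp, fun j h₁ h₂ => ?_⟩
    ext A
    by_cases hA : A ∈ V <;> simp [hA, hw']

end traceOf

theorem QLTLf.sat_traceOf_iff_sat_toMSO {P : Type*} [DecidableEq P] {n : ℕ} (φ : QLTLf P)
    (w : P → Set (Fin n)) (u : ℕ → Fin n) (x : ℕ) :
    QLTLf.Sat (traceOf w) φ (u x) ↔ MSO.Sat n (φ.toMSO x) w u := by
  induction φ generalizing w u x with
  | atom A => simp [QLTLf.Sat, QLTLf.toMSO, MSO.Sat]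
  | not φ ih => simp only [QLTLf.Sat, QLTLf.toMSO, MSO.Sat, ih]
  | and φ ψ ihφ ihψ => simp only [QLTLf.Sat, QLTLf.toMSO, MSO.Sat, ihφ, ihψ]
  | next φ ih =>
    simp only [QLTLf.Sat, QLTLf.toMSO, MSO.Sat, MSO.sat_succ, ← ih, consEnv_zero, consEnv_succ,
      length_traceOf]
    exact ⟨fun ⟨hlt, hsat⟩ => ⟨⟨_, hlt⟩, rfl, hsat⟩,
      fun ⟨d, hd, hsat⟩ => ⟨hd ▸ d.isLt, hd ▸ hsat⟩⟩
  | until_ φ ψ ihφ ihψ =>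
    simp only [QLTLf.Sat, QLTLf.toMSO, MSO.Sat, MSO.sat_le, MSO.sat_leLast, MSO.sat_allFO,
      MSO.sat_impl, ← ihφ, ← ihψ, consEnv_zero, consEnv_succ, length_traceOf, Fin.le_def,
      Fin.lt_def, and_true]
    constructor
    · rintro ⟨j, hxj, hjn, hψ, hφ⟩
      exact ⟨⟨j, hjn⟩, hxj, hψ, fun k ⟨hxk, hkj⟩ => hφ k hxk hkj⟩
    · rintro ⟨d, hxd, hψ, hφ⟩
      exact ⟨d, hxd, d.isLt, hψ, fun k hxk hkd => hφ ⟨k, by omega⟩ ⟨hxk, hkd⟩⟩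
  | ex p φ ih =>
    simp only [QLTLf.Sat, QLTLf.toMSO, MSO.Sat, ← ih, equivUpTo_traceOf_iff]
    constructor
    · rintro ⟨_, ⟨w', hw', rfl⟩, hsat⟩
      exact ⟨w' p, Function.eq_update_iff.2 ⟨rfl, hw'⟩ ▸ hsat⟩
    · rintro ⟨D, hsat⟩
      exact ⟨_, ⟨_, fun A hA => Function.update_of_ne hA .., rfl⟩, hsat⟩

theorem qltlf_mso_translation_correct_general {P : Type*} [DecidableEq P]
    (φ : QLTLf P) (t : List (Set P))
    (i : ℕ) (hi : i < t.length) (x : ℕ) (u : ℕ → Fin t.length)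
    (hx : u x = ⟨i, hi⟩) :
    QLTLf.Sat t φ i ↔
      MSO.Sat t.length (φ.toMSO x)
        (fun A => {j : Fin t.length | A ∈ t.get j}) u := by
  have h := QLTLf.sat_traceOf_iff_sat_toMSO φ (fun A => {j : Fin t.length | A ∈ t.get j}) u x
  rwa [traceOf_setOf_mem_get, hx] at h

/-- For every QLTLf formula `φ`, every finite trace `t`, and every
position `i` of `t`: `t, i ⊨ φ` iff the MSO translation `mso(φ, x)` is satisfied under
the trace-induced second-order assignment `w_t(A) = { j | A ∈ t(j) }` and any first-order
assignment sending `x` to `i`. -/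
theorem qltlf_mso_translation_correct {P : Type*} [DecidableEq P]
    (φ : QLTLf P) (t : List (Set P)) (ht : t ≠ [])
    (i : ℕ) (hi : i < t.length) (x : ℕ) (u : ℕ → Fin t.length)
    (hx : u x = ⟨i, hi⟩) :
    QLTLf.Sat t φ i ↔
      MSO.Sat t.length (φ.toMSO x)
        (fun A => {j : Fin t.length | A ∈ t.get j}) u :=
  qltlf_mso_translation_correct_general φ t i hi x u hx
end
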